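/- arXiv:2410.07786 — 6 statements merged into one kernel-verified Lean document; each statement's English description precedes it below -/
import Mathlib

section
/- Let x ∈ ℝᵐ be entrywise nonnegative with Σ_{i=1}^m x_i > 0, and let w ∈ ℝᵐ be entrywise strictly positive. Define f(α) = Σ_{i=1}^m D_KL(x_i, α w_i) for α > 0, and set α* = (Σ_{i=1}^m x_i)/(Σ_{i=1}^m w_i). Then α* > 0 and f(α*) ≤ f(α) for every α > 0. -/
/-- Scalar Kullback–Leibler divergence `D_KL(x, y) = y - x + x·log(x/y)`.
Note that for `x = 0` we get `D_KL(0, y) = y` since `0 * log 0 = 0`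
(`Real.log 0 = 0` in Mathlib). -/
noncomputable def klDiv (x y : ℝ) : ℝ := y - x + x * Real.log (x / y)

lemma klDiv_scaled (xi wi c : ℝ) (hxi : 0 ≤ xi) (hwi : 0 < wi) (hc : 0 < c) :
    klDiv xi (c * wi) = c * wi - xi + xi * Real.log (xi / wi) - xi * Real.log c := by
  rcases eq_or_lt_of_le hxi with h | h
  · simp [klDiv, ← h]
  · unfold klDiv
    have : xi / (c * wi) = (xi / wi) / c := by rw [div_mul_eq_div_div, div_right_comm]
    rw [this, Real.log_div (by positivity) (ne_of_gt hc)]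
    ring

/-- Lemma 1 of the paper: the optimal scaling of a positive vector `w`
approximating a nonnegative vector `x` in the KL divergence is
`α* = (Σ x_i)/(Σ w_i)`. -/
theorem kl_optimal_scaling (m : ℕ) (x w : Fin m → ℝ)
    (hx : ∀ i, 0 ≤ x i) (hxs : 0 < ∑ i, x i) (hw : ∀ i, 0 < w i) :
    0 < (∑ i, x i) / (∑ i, w i) ∧
    ∀ α : ℝ, 0 < α →
      ∑ i, klDiv (x i) ((∑ i', x i') / (∑ i', w i') * w i)
        ≤ ∑ i, klDiv (x i) (α * w i) := by
  have hm : m ≠ 0 := by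
    rintro rfl
    simp at hxs
  have hne : (Finset.univ : Finset (Fin m)).Nonempty := by
    simpa [Finset.univ_nonempty_iff] using Fin.pos_iff_nonempty.mp (Nat.pos_of_ne_zero hm)
  have hws : 0 < ∑ i, w i := Finset.sum_pos (fun i _ => hw i) hne
  set X := ∑ i, x i with hX
  set W := ∑ i, w i with hW
  have hαs : 0 < X / W := div_pos hxs hws
  refine ⟨hαs, fun α hα => ?_⟩
  have key : ∀ c : ℝ, 0 < c →
      ∑ i, klDiv (x i) (c * w i)
        = c * W - X + (∑ i, x i * Real.log (x i / w i)) - X * Real.log c := by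
    intro c hc
    rw [Finset.sum_congr rfl (fun i _ => klDiv_scaled (x i) (w i) c (hx i) (hw i) hc)]
    simp [Finset.sum_add_distrib, Finset.sum_sub_distrib, Finset.mul_sum,
      Finset.sum_mul, hX, hW]
  rw [key _ hαs, key _ hα]
  have hlog : Real.log (X / W) = Real.log X - Real.log W :=
    Real.log_div (ne_of_gt hxs) (ne_of_gt hws)
  -- reduce to: (X/W)*W - X*log(X/W) ≤ α*W - X*log α
  have hXW : X / W * W = X := div_mul_cancel₀ X (ne_of_gt hws)
  have h1 : Real.log (α * W / X) ≤ α * W / X - 1 :=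
    Real.log_le_sub_one_of_pos (by positivity)
  have h2 : X * Real.log (α * W / X) ≤ α * W - X := by
    have := mul_le_mul_of_nonneg_left h1 (le_of_lt hxs)
    calc X * Real.log (α * W / X) ≤ X * (α * W / X - 1) := this
      _ = α * W - X := by field_simp
  have h3 : Real.log (α * W / X) = Real.log α + Real.log W - Real.log X := by
    rw [Real.log_div (by positivity) (ne_of_gt hxs), Real.log_mul (ne_of_gt hα) (ne_of_gt hws)]
  rw [h3] at h2
  rw [hXW, hlog]
  nlinarith [h2]
end

section
/- Let x ∈ ℝᵐ be entrywise nonnegative with Σ_{i=1}^m x_i > 0, and let w ∈ ℝᵐ be entrywise strictly positive. Define f(α) = Σ_{i=1}^m D_KL(x_i, α w_i) for α > 0, and set α* = (Σ_{i=1}^m x_i)/(Σ_{i=1}^m w_i). Then α* is the unique minimizer of f on (0, ∞): f(α*) < f(α) for every α > 0 with α ≠ α*. -/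
/-- Strengthened Lemma 1: `α* = (Σ x_i)/(Σ w_i)` is the *unique* minimizer of
`α ↦ Σ_i D_KL(x_i, α w_i)` on `(0, ∞)`. -/
theorem kl_optimal_scaling_unique (m : ℕ) (x w : Fin m → ℝ)
    (hx : ∀ i, 0 ≤ x i) (hxs : 0 < ∑ i, x i) (hw : ∀ i, 0 < w i) :
    ∀ α : ℝ, 0 < α → α ≠ (∑ i, x i) / (∑ i, w i) →
      ∑ i, klDiv (x i) ((∑ i', x i') / (∑ i', w i') * w i)
        < ∑ i, klDiv (x i) (α * w i) := by
  intro α hα hne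
  set S := ∑ i, x i with hSdef
  set W := ∑ i, w i with hWdef
  have hne' : (Finset.univ : Finset (Fin m)).Nonempty := by
    rcases (Finset.univ : Finset (Fin m)).eq_empty_or_nonempty with h | h
    · exfalso; rw [hSdef, h, Finset.sum_empty] at hxs; exact lt_irrefl 0 hxs
    · exact h
  have hWpos : 0 < W := Finset.sum_pos (fun i _ => hw i) hne'
  have key : ∀ β : ℝ, 0 < β → ∑ i, klDiv (x i) (β * w i)
      = β * W - S + (∑ i, x i * Real.log (x i / w i)) - S * Real.log β := by
    intro β hβ
    have hterm : ∀ i, klDiv (x i) (β * w i)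
        = β * w i - x i + x i * Real.log (x i / w i) - x i * Real.log β := by
      intro i
      unfold klDiv
      rcases eq_or_lt_of_le (hx i) with h | h
      · simp [← h]
      · have hwi := hw i
        have hdiv : x i / (β * w i) = (x i / w i) / β := by
          rw [div_div, mul_comm]
        rw [hdiv, Real.log_div (by positivity) (ne_of_gt hβ)]
        ring
    calc ∑ i, klDiv (x i) (β * w i)
        = ∑ i, (β * w i - x i + x i * Real.log (x i / w i) - x i * Real.log β) :=
          Finset.sum_congr rfl fun i _ => hterm i
      _ = β * W - S + (∑ i, x i * Real.log (x i / w i)) - S * Real.log β := by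
          simp only [Finset.sum_sub_distrib, Finset.sum_add_distrib, ← Finset.mul_sum,
            ← Finset.sum_mul, hSdef, hWdef]
  have hα0 : 0 < S / W := div_pos hxs hWpos
  rw [key α hα, key (S / W) hα0]
  have ht : 0 < α / (S / W) := div_pos hα hα0
  have htne : α / (S / W) ≠ 1 := by
    intro h
    exact hne ((div_eq_one_iff_eq hα0.ne').mp h)
  have hlog := Real.log_lt_sub_one_of_pos ht htne
  rw [Real.log_div hα.ne' hα0.ne'] at hlog
  have hcc : S / W * W = S := div_mul_cancel₀ S hWpos.ne'
  have hsa : S * (α / (S / W)) = α * W := by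
    field_simp
  nlinarith [mul_lt_mul_of_pos_left hlog hxs]
end

section
/- Let x ∈ ℝᵐ be entrywise nonnegative with s_x := Σ_{i=1}^m x_i > 0, let w ∈ ℝᵐ be entrywise strictly positive with s_w := Σ_{i=1}^m w_i, and set α* = s_x/s_w. Then the KL approximation error at the optimal scaling equals Σ_{i=1}^m D_KL(x_i, α* w_i) = Σ_{i : x_i > 0} x_i·log x_i − s_x·log s_x − Σ_{i : x_i > 0} x_i·log(w_i/s_w). In particular, the linear terms cancel: Σ_i α* w_i = Σ_i x_i. -/
/-- Closed form of the KL error at the optimal scaling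
`α* = s_x / s_w`; in particular the linear terms cancel: `α* Σ w = Σ x`. -/
theorem kl_optimal_error_value (m : ℕ) (x w : Fin m → ℝ)
    (hx : ∀ i, 0 ≤ x i) (hxs : 0 < ∑ i, x i) (hw : ∀ i, 0 < w i) :
    (∑ i, klDiv (x i) ((∑ i', x i') / (∑ i', w i') * w i)
      = (∑ i ∈ Finset.univ.filter (fun i => 0 < x i), x i * Real.log (x i))
        - (∑ i, x i) * Real.log (∑ i, x i)
        - ∑ i ∈ Finset.univ.filter (fun i => 0 < x i),
            x i * Real.log (w i / (∑ i', w i')))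
    ∧ (∑ i, (∑ i', x i') / (∑ i', w i') * w i) = ∑ i, x i := by
  set sx := ∑ i, x i with hsx
  set sw := ∑ i, w i with hsw
  have hm : 0 < m := by
    rcases Nat.eq_zero_or_pos m with h | h
    · subst h
      rw [hsx] at hxs
      simp at hxs
    · exact h
  have hsw0 : 0 < sw := Finset.sum_pos (fun i _ => hw i) (by simp [Finset.univ_nonempty_iff, Fin.pos_iff_nonempty.mp hm])
  have hcancel : (∑ i, sx / sw * w i) = sx := by
    rw [← Finset.mul_sum, ← hsw, div_mul_cancel₀]
    exact hsw0.ne'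
  refine ⟨?_, hcancel⟩
  have h1 : (∑ i, klDiv (x i) (sx / sw * w i))
      = (∑ i, (sx / sw * w i - x i)) + ∑ i, x i * Real.log (x i / (sx / sw * w i)) := by
    rw [← Finset.sum_add_distrib]
    rfl
  rw [h1, Finset.sum_sub_distrib, hcancel]
  simp only [← hsx, sub_self, zero_add]
  have hxsum : ∑ i ∈ Finset.univ.filter (fun i => 0 < x i), x i = sx := by
    rw [hsx]
    apply Finset.sum_filter_of_ne
    intro i _ h
    rcases (hx i).lt_or_eq with h' | h'
    · exact h'
    · exact absurd h'.symm h
  have h2 : (∑ i, x i * Real.log (x i / (sx / sw * w i)))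
      = ∑ i ∈ Finset.univ.filter (fun i => 0 < x i), x i * Real.log (x i / (sx / sw * w i)) := by
    symm
    apply Finset.sum_filter_of_ne
    intro i _ h
    rcases (hx i).lt_or_eq with h'' | h''
    · exact h''
    · exact absurd (by rw [← h'']; ring) h
  rw [h2]
  have h3 : ∀ i ∈ Finset.univ.filter (fun i => 0 < x i),
      x i * Real.log (x i / (sx / sw * w i))
      = x i * Real.log (x i) - x i * Real.log sx - x i * Real.log (w i / sw) := by
    intro i hi
    simp only [Finset.mem_filter] at hi
    have hxi := hi.2
    have hwi := hw i
    have : sx / sw * w i = sx * (w i / sw) := by ring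
    rw [this, Real.log_div hxi.ne' (by positivity),
        Real.log_mul hxs.ne' (by positivity)]
    ring
  rw [Finset.sum_congr rfl h3]
  rw [Finset.sum_sub_distrib, Finset.sum_sub_distrib, ← Finset.sum_mul, hxsum]
end

section
/- Let x ∈ ℝᵐ be entrywise nonnegative with Σ_{i=1}^m x_i > 0, and let w, v ∈ ℝᵐ be entrywise strictly positive. If Σ_{i=1}^m x_i·log(w_i / Σ_{l=1}^m w_l) ≥ Σ_{i=1}^m x_i·log(v_i / Σ_{l=1}^m v_l), then the optimally scaled KL approximation error using w is no worse than that using v: with α_w = (Σ_i x_i)/(Σ_i w_i) and α_v = (Σ_i x_i)/(Σ_i v_i), one has Σ_{i=1}^m D_KL(x_i, α_w w_i) ≤ Σ_{i=1}^m D_KL(x_i, α_v v_i). -/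
lemma kl_sum_eq (m : ℕ) (x u : Fin m → ℝ)
    (hx : ∀ i, 0 ≤ x i) (hxs : 0 < ∑ i, x i) (hu : ∀ i, 0 < u i) :
    ∑ i, klDiv (x i) ((∑ i', x i') / (∑ i', u i') * u i)
      = ∑ i, x i * Real.log (x i) - (∑ i, x i) * Real.log (∑ i, x i)
        - ∑ i, x i * Real.log (u i / ∑ l, u l) := by
  have hm : m ≠ 0 := by
    rintro rfl
    simp at hxs
  have hSu : 0 < ∑ l, u l :=
    Finset.sum_pos (fun i _ => hu i)
      (Finset.univ_nonempty_iff.mpr ⟨⟨0, Nat.pos_of_ne_zero hm⟩⟩)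
  have hterm : ∀ i, klDiv (x i) ((∑ i', x i') / (∑ i', u i') * u i)
      = ((∑ i', x i') / (∑ i', u i') * u i - x i)
        + (x i * Real.log (x i) - x i * Real.log (∑ i', x i')
          - x i * Real.log (u i / ∑ l, u l)) := by
    intro i
    unfold klDiv
    have hcase : x i * Real.log (x i / ((∑ i', x i') / (∑ i', u i') * u i))
        = x i * Real.log (x i) - x i * Real.log (∑ i', x i')
          - x i * Real.log (u i / ∑ l, u l) := by
      rcases eq_or_lt_of_le (hx i) with h | h
      · simp [← h]
      · have h1 : ((∑ i', x i') / (∑ i', u i') * u i)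
            = (∑ i', x i') * (u i / ∑ l, u l) := by ring
        rw [h1, Real.log_div h.ne' (mul_pos hxs (div_pos (hu i) hSu)).ne',
          Real.log_mul hxs.ne' (div_pos (hu i) hSu).ne']
        ring
    rw [hcase]
  rw [Finset.sum_congr rfl (fun i _ => hterm i)]
  simp only [Finset.sum_add_distrib, Finset.sum_sub_distrib]
  rw [← Finset.mul_sum, div_mul_cancel₀ _ hSu.ne', ← Finset.sum_mul]
  ring

/-- Column-selection rule of KL-ONMF: if
`Σ_i x_i log(w_i/Σ_l w_l) ≥ Σ_i x_i log(v_i/Σ_l v_l)`, then the optimally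
scaled KL approximation error using `w` is no worse than that using `v`. -/
theorem kl_onmf_column_selection (m : ℕ) (x w v : Fin m → ℝ)
    (hx : ∀ i, 0 ≤ x i) (hxs : 0 < ∑ i, x i)
    (hw : ∀ i, 0 < w i) (hv : ∀ i, 0 < v i)
    (hcmp : ∑ i, x i * Real.log (v i / ∑ l, v l)
      ≤ ∑ i, x i * Real.log (w i / ∑ l, w l)) :
    ∑ i, klDiv (x i) ((∑ i', x i') / (∑ i', w i') * w i)
      ≤ ∑ i, klDiv (x i) ((∑ i', x i') / (∑ i', v i') * v i) := by
  rw [kl_sum_eq m x w hx hxs hw, kl_sum_eq m x v hx hxs hv]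
  linarith
end

section
/- Let x_1, …, x_n ∈ ℝᵐ be entrywise nonnegative vectors such that the vector Σ_{j=1}^n x_j is entrywise strictly positive, and let h_1, …, h_n be strictly positive reals. Set w* = (Σ_{j=1}^n x_j)/(Σ_{j=1}^n h_j) (entrywise division by the scalar Σ_j h_j). Then w* is entrywise strictly positive and, for every entrywise strictly positive w ∈ ℝᵐ, Σ_{j=1}^n D_KL(x_j, h_j w*) ≤ Σ_{j=1}^n D_KL(x_j, h_j w), where D_KL applied to vectors means the sum of the scalar divergences over the entries. -/
/-- Lemma 2 of the paper: the closed-form update of a centroid in KL-ONMF.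
`w* = (Σ_j x_j)/(Σ_j h_j)` minimizes `w ↦ Σ_j D_KL(x_j, h_j w)` over
entrywise positive vectors `w`. -/
theorem kl_onmf_W_update_optimal (m n : ℕ) (x : Fin n → Fin m → ℝ)
    (h : Fin n → ℝ)
    (hx : ∀ j i, 0 ≤ x j i) (hxs : ∀ i, 0 < ∑ j, x j i) (hh : ∀ j, 0 < h j) :
    (∀ i, 0 < (∑ j, x j i) / (∑ j, h j)) ∧
    ∀ w : Fin m → ℝ, (∀ i, 0 < w i) →
      ∑ j, ∑ i, klDiv (x j i) (h j * ((∑ j', x j' i) / (∑ j', h j')))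
        ≤ ∑ j, ∑ i, klDiv (x j i) (h j * w i) := by
  rcases Nat.eq_zero_or_pos n with hn | hn
  · subst hn
    constructor
    · intro i
      exact absurd (hxs i) (by simp)
    · intro w hw
      simp
  have : Nonempty (Fin n) := ⟨⟨0, hn⟩⟩
  have hH : 0 < ∑ j, h j := Finset.sum_pos (fun j _ => hh j) Finset.univ_nonempty
  set H : ℝ := ∑ j, h j with hHdef
  -- closed form of the inner sum
  have keysum : ∀ (i : Fin m) (c : ℝ), 0 < c →
      ∑ j, klDiv (x j i) (h j * c)
        = H * c - (∑ j, x j i) + (∑ j, x j i * Real.log (x j i / h j))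
            - (∑ j, x j i) * Real.log c := by
    intro i c hc
    have term : ∀ j, x j i * Real.log (x j i / (h j * c))
        = x j i * Real.log (x j i / h j) - x j i * Real.log c := by
      intro j
      rcases eq_or_lt_of_le (hx j i) with h0 | h0
      · simp [← h0]
      · rw [div_mul_eq_div_div, Real.log_div (div_pos h0 (hh j)).ne' hc.ne', mul_sub]
    calc ∑ j, klDiv (x j i) (h j * c)
        = ∑ j, (h j * c - x j i
            + (x j i * Real.log (x j i / h j) - x j i * Real.log c)) := by
          refine Finset.sum_congr rfl fun j _ => ?_
          rw [klDiv, term j]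
      _ = (∑ j, h j * c) - (∑ j, x j i) + ((∑ j, x j i * Real.log (x j i / h j))
            - (∑ j, x j i * Real.log c)) := by
          rw [Finset.sum_add_distrib, Finset.sum_sub_distrib, Finset.sum_sub_distrib]
      _ = H * c - (∑ j, x j i) + (∑ j, x j i * Real.log (x j i / h j))
            - (∑ j, x j i) * Real.log c := by
          rw [← Finset.sum_mul, ← Finset.sum_mul, ← hHdef]; ring
  refine ⟨fun i => div_pos (hxs i) hH, fun w hw => ?_⟩
  calc ∑ j, ∑ i, klDiv (x j i) (h j * ((∑ j', x j' i) / (∑ j', h j')))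
      = ∑ i, ∑ j, klDiv (x j i) (h j * ((∑ j', x j' i) / (∑ j', h j'))) :=
        Finset.sum_comm
    _ ≤ ∑ i, ∑ j, klDiv (x j i) (h j * w i) := by
        refine Finset.sum_le_sum fun i _ => ?_
        have hXi : 0 < ∑ j, x j i := hxs i
        have hwi : 0 < w i := hw i
        rw [keysum i _ (div_pos hXi hH), keysum i _ hwi]
        set X : ℝ := ∑ j, x j i with hXdef
        have hlog : Real.log (H * w i / X) ≤ H * w i / X - 1 :=
          Real.log_le_sub_one_of_pos (by positivity)
        have e1 : Real.log (H * w i / X) = Real.log H + Real.log (w i) - Real.log X := by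
          rw [Real.log_div (by positivity) hXi.ne', Real.log_mul hH.ne' hwi.ne']
        have e2 : Real.log (X / H) = Real.log X - Real.log H :=
          Real.log_div hXi.ne' hH.ne'
        have key : X * Real.log (H * w i / X) ≤ X * (H * w i / X - 1) :=
          mul_le_mul_of_nonneg_left hlog hXi.le
        have e3 : X * (H * w i / X) = H * w i := by field_simp
        have e4 : H * (X / H) = X := by field_simp
        nlinarith [key, e1, e2, e3, e4]
    _ = ∑ j, ∑ i, klDiv (x j i) (h j * w i) := Finset.sum_comm
end

section
/- Let x_1, …, x_n ∈ ℝᵐ be entrywise nonnegative vectors such that Σ_{j=1}^n x_j is entrywise strictly positive, and let h_1, …, h_n be strictly positive reals. Set w* = (Σ_{j=1}^n x_j)/(Σ_{j=1}^n h_j). Then w* is the unique minimizer over entrywise strictly positive vectors: for every entrywise strictly positive w ∈ ℝᵐ with w ≠ w*, Σ_{j=1}^n D_KL(x_j, h_j w*) < Σ_{j=1}^n D_KL(x_j, h_j w). -/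
lemma klDiv_nonneg' {a b : ℝ} (ha : 0 ≤ a) (hb : 0 < b) : 0 ≤ klDiv a b := by
  rcases eq_or_lt_of_le ha with rfl | ha
  · simp [klDiv]; linarith
  · have h1 : Real.log (a / b) = -Real.log (b / a) := by
      rw [← Real.log_inv, inv_div]
    have h2 : Real.log (b / a) ≤ b / a - 1 := Real.log_le_sub_one_of_pos (div_pos hb ha)
    unfold klDiv
    rw [h1]
    have : a * Real.log (b / a) ≤ a * (b / a - 1) := by
      exact mul_le_mul_of_nonneg_left h2 (le_of_lt ha)
    have h3 : a * (b / a - 1) = b - a := by field_simp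
    nlinarith

lemma klDiv_pos' {a b : ℝ} (ha : 0 < a) (hb : 0 < b) (hab : a ≠ b) : 0 < klDiv a b := by
  have h1 : Real.log (a / b) = -Real.log (b / a) := by
    rw [← Real.log_inv, inv_div]
  have h2 : Real.log (b / a) < b / a - 1 := by
    apply Real.log_lt_sub_one_of_pos (div_pos hb ha)
    intro hba
    exact hab (by field_simp at hba; linarith)
  unfold klDiv
  rw [h1]
  have : a * Real.log (b / a) < a * (b / a - 1) := by
    exact mul_lt_mul_of_pos_left h2 ha
  have h3 : a * (b / a - 1) = b - a := by field_simp
  nlinarith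

/-- Strengthened Lemma 2: the centroid `w* = (Σ_j x_j)/(Σ_j h_j)` is the
*unique* minimizer of `w ↦ Σ_j D_KL(x_j, h_j w)` over entrywise positive
vectors `w`. -/
theorem kl_onmf_W_update_unique (m n : ℕ) (x : Fin n → Fin m → ℝ)
    (h : Fin n → ℝ)
    (hx : ∀ j i, 0 ≤ x j i) (hxs : ∀ i, 0 < ∑ j, x j i) (hh : ∀ j, 0 < h j) :
    ∀ w : Fin m → ℝ, (∀ i, 0 < w i) →
      w ≠ (fun i => (∑ j, x j i) / (∑ j, h j)) →
      ∑ j, ∑ i, klDiv (x j i) (h j * ((∑ j', x j' i) / (∑ j', h j')))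
        < ∑ j, ∑ i, klDiv (x j i) (h j * w i) := by
  intro w hw hne
  set W : Fin m → ℝ := fun i => (∑ j', x j' i) / (∑ j', h j') with hWdef
  rcases Nat.eq_zero_or_pos m with hm | hm
  · subst hm
    exfalso; exact hne (funext fun i => absurd i.2 (Nat.not_lt_zero _))
  have hnun : (Finset.univ : Finset (Fin n)).Nonempty := by
    rcases (Finset.univ : Finset (Fin n)).eq_empty_or_nonempty with h' | h'
    · exfalso
      have := hxs ⟨0, hm⟩
      rw [h'] at this
      simp at this
    · exact h'
  have hH : 0 < ∑ j, h j := Finset.sum_pos (fun j _ => hh j) hnun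
  have hWpos : ∀ i, 0 < W i := fun i => div_pos (hxs i) hH
  have hS : ∀ i, (∑ j, x j i) = W i * (∑ j, h j) := by
    intro i
    rw [hWdef]
    field_simp
  -- pointwise step
  have step : ∀ j i, klDiv (x j i) (h j * w i) - klDiv (x j i) (h j * W i)
      = h j * (w i - W i) + x j i * Real.log (W i / w i) := by
    intro j i
    rcases eq_or_lt_of_le (hx j i) with hx0 | hx0
    · simp [klDiv, ← hx0]
      ring
    · unfold klDiv
      have hxne := ne_of_gt hx0
      have hhw : (h j * w i) ≠ 0 := ne_of_gt (mul_pos (hh j) (hw i))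
      have hhW : (h j * W i) ≠ 0 := ne_of_gt (mul_pos (hh j) (hWpos i))
      rw [Real.log_div hxne hhw, Real.log_div hxne hhW,
        Real.log_mul (ne_of_gt (hh j)) (ne_of_gt (hw i)),
        Real.log_mul (ne_of_gt (hh j)) (ne_of_gt (hWpos i)),
        Real.log_div (ne_of_gt (hWpos i)) (ne_of_gt (hw i))]
      ring
  have key : ∀ i, (∑ j, klDiv (x j i) (h j * w i)) - (∑ j, klDiv (x j i) (h j * W i))
      = (∑ j, h j) * klDiv (W i) (w i) := by
    intro i
    rw [← Finset.sum_sub_distrib, Finset.sum_congr rfl (fun j _ => step j i),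
      Finset.sum_add_distrib, ← Finset.sum_mul, ← Finset.sum_mul, hS i]
    unfold klDiv
    ring
  have hdiff : (∑ j, ∑ i, klDiv (x j i) (h j * w i))
      - (∑ j, ∑ i, klDiv (x j i) (h j * W i))
      = ∑ i, (∑ j, h j) * klDiv (W i) (w i) := by
    rw [Finset.sum_comm (f := fun j i => klDiv (x j i) (h j * w i)),
      Finset.sum_comm (f := fun j i => klDiv (x j i) (h j * W i)),
      ← Finset.sum_sub_distrib]
    exact Finset.sum_congr rfl (fun i _ => key i)
  obtain ⟨i0, hi0⟩ : ∃ i, w i ≠ W i := by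
    by_contra hc
    push_neg at hc
    exact hne (funext hc)
  have hpos : 0 < ∑ i, (∑ j, h j) * klDiv (W i) (w i) := by
    apply Finset.sum_pos'
    · intro i _
      exact mul_nonneg (le_of_lt hH) (klDiv_nonneg' (le_of_lt (hWpos i)) (hw i))
    · exact ⟨i0, Finset.mem_univ i0,
        mul_pos hH (klDiv_pos' (hWpos i0) (hw i0) (Ne.symm hi0))⟩
  linarith [hdiff, hpos]
end
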